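/- arXiv:1404.6271 — 4 statements merged into one kernel-verified Lean document; each statement's English description precedes it below -/
import Mathlib

section
/- For every constant C > 0 there exists a constant c > 0 such that: for every multiplicative function f : ℕ → ℝ with f ≥ 0, f(1) = 1, f(mn) = f(m)f(n) whenever gcd(m,n) = 1, and f(p^k) ≤ C·k for every prime p and every integer k ≥ 1, and for every real x ≥ 2, one has Σ_{n ≤ x} f(n) ≤ c·(x/log x)·exp(Σ_{p ≤ x, p prime} f(p)/p). -/
/-!
Let `S = ∑_{n ≤ x} f n` and `T = ∑_{n ≤ x} f n / n`. Splitting `log x = log n + log (x / n)` and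
using `log y ≤ y` gives `S log x ≤ ∑_{n ≤ x} f n log n + x T`. Writing `log n = ∑_{p^a ∥ n} a log p`
and `n = p^a m` with `p ∤ m`, the hypothesis `f (p^a) ≤ C a` gives
`∑_{n ≤ x} f n log n ≤ C ∑_{p^a ≤ x} a² log p ∑_{m ≤ x/p^a} f m`. After swapping the sums, the
terms with `a = 1` are at most `x T log 4` by Chebyshev's bound `θ y ≤ y log 4`; the terms with
`a ≥ 2` are `≪ x T` because `∑_{m ≤ y} f m ≤ y T` and `∑_{p, a ≥ 2} a² log p / p^a` converges.
Hence `S log x ≪ x T`. Finally, by the Euler product,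
`T ≤ ∏_{p ≤ x} ∑_a f (p^a) / p^a ≤ exp (∑_{p ≤ x} f p / p + O(∑_p 1 / p²))`.
-/

open Finset Real

lemma Finset.sum_comp_le_sum_of_injOn {ι κ : Type*} {s : Finset ι} {t : Finset κ} {g : κ → ℝ}
    (e : ι → κ) (he : Set.InjOn e s) (hest : Set.MapsTo e s t) (hg : ∀ j ∈ t, 0 ≤ g j) :
    ∑ i ∈ s, g (e i) ≤ ∑ j ∈ t, g j := by
  classical
  rw [← sum_image he]
  exact sum_le_sum_of_subset_of_nonneg (image_subset_iff.2 hest) fun j hj _ ↦ hg j hj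

lemma Finset.sum_range_succ_eq_add_add_sum_Icc {M : Type*} [AddCommMonoid M] (u : ℕ → M)
    {N : ℕ} (hN : 1 ≤ N) : ∑ a ∈ range (N + 1), u a = u 0 + u 1 + ∑ a ∈ Icc 2 N, u a := by
  rw [range_eq_Ico, sum_eq_sum_Ico_succ_bot (by omega), sum_eq_sum_Ico_succ_bot (by omega),
    Ico_add_one_right_eq_Icc]
  simp only [zero_add, Nat.reduceAdd, add_assoc]

lemma Nat.primeFactors_subset_filter_prime_Icc {n N : ℕ} (hn : n ∈ Icc 1 N) :
    n.primeFactors ⊆ (Icc 1 N).filter Nat.Prime := by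
  intro p hp
  have hp' := Nat.prime_of_mem_primeFactors hp
  exact mem_filter.mpr
    ⟨mem_Icc.mpr ⟨hp'.one_le, (Nat.le_of_mem_primeFactors hp).trans (mem_Icc.mp hn).2⟩, hp'⟩

lemma Nat.apply_eq_prod_pow_factorization {M : Type*} [CommMonoid M] {h : ℕ → M}
    (hmul : ∀ m n : ℕ, m.Coprime n → h (m * n) = h m * h n) (h1 : h 1 = 1) {n : ℕ}
    (hn : n ≠ 0) {P : Finset ℕ} (hP : n.primeFactors ⊆ P) :
    h n = ∏ p ∈ P, h (p ^ n.factorization p) := by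
  rw [Nat.multiplicative_factorization h hmul h1 hn]
  exact Finsupp.prod_of_support_subset _ (by rwa [Nat.support_factorization]) _
    fun p _ ↦ by rw [pow_zero, h1]

lemma Real.log_natCast_eq_sum_factorization_mul_log {n : ℕ} {P : Finset ℕ}
    (hP : n.primeFactors ⊆ P) :
    log n = ∑ p ∈ P, n.factorization p * log p := by
  rw [Real.log_nat_eq_sum_factorization]
  exact Finsupp.sum_of_support_subset _ (by rwa [Nat.support_factorization]) _
    fun p _ ↦ by rw [Nat.cast_zero, zero_mul]

lemma sum_Icc_le_prod_primes_sum_range_pow {h : ℕ → ℝ} (h0 : ∀ n, 0 ≤ h n)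
    (hmul : ∀ m n : ℕ, m.Coprime n → h (m * n) = h m * h n) (h1 : h 1 = 1) (N : ℕ) :
    ∑ n ∈ Icc 1 N, h n
      ≤ ∏ p ∈ (Icc 1 N).filter Nat.Prime, ∑ a ∈ range (N + 1), h (p ^ a) := by
  set P := (Icc 1 N).filter Nat.Prime
  set exponents : ℕ → (p : ℕ) → p ∈ P → ℕ := fun n p _ ↦ n.factorization p
  have hprod : ∀ n ∈ Icc 1 N, ∀ {M : Type} [CommMonoid M] (g : ℕ → M),
      (∀ m n : ℕ, m.Coprime n → g (m * n) = g m * g n) → g 1 = 1 →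
      g n = ∏ p ∈ P.attach, g (p.1 ^ exponents n p.1 p.2) := by
    intro n hn M _ g hgmul hg1
    rw [prod_attach P fun p ↦ g (p ^ n.factorization p)]
    exact Nat.apply_eq_prod_pow_factorization hgmul hg1 (by grind)
      (Nat.primeFactors_subset_filter_prime_Icc hn)
  -- `hprod` applied to the identity map: the exponents of `n` determine `n`.
  have hinj : Set.InjOn exponents (Icc 1 N) := by
    intro n hn m hm hnm
    rw [hprod n hn (fun k : ℕ ↦ k) (fun _ _ _ ↦ rfl) rfl,
      hprod m hm (fun k : ℕ ↦ k) (fun _ _ _ ↦ rfl) rfl, hnm]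
  have hmaps : Set.MapsTo exponents (Icc 1 N) (P.pi fun _ ↦ range (N + 1)) := fun n hn ↦
    mem_pi.mpr fun p _ ↦ mem_range.mpr
      ((Nat.factorization_lt p (by grind)).trans_le (by grind))
  rw [prod_sum, sum_congr rfl fun n hn ↦ hprod n hn h hmul h1]
  exact (sum_comp_le_sum_of_injOn (g := fun e ↦ ∏ p ∈ P.attach, h (p.1 ^ e p.1 p.2))
    exponents hinj hmaps fun _ _ ↦ prod_nonneg fun _ _ ↦ h0 _ :)

lemma sum_range_sq_div_two_pow (K : ℕ) :
    ∑ a ∈ range K, (a : ℝ) ^ 2 / 2 ^ a = 6 - (2 * (K : ℝ) ^ 2 + 4 * K + 6) / 2 ^ K := by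
  induction K with
  | zero => norm_num
  | succ K ih =>
    rw [sum_range_succ, ih]
    push_cast
    field_simp
    ring

lemma sum_Icc_sq_div_pow_le {p : ℝ} (hp : 2 ≤ p) (K : ℕ) :
    ∑ a ∈ Icc 2 K, (a : ℝ) ^ 2 / p ^ a ≤ 24 / p ^ 2 := by
  have hterm : ∀ a ∈ Icc 2 K, (a : ℝ) ^ 2 / p ^ a ≤ 4 / p ^ 2 * ((a : ℝ) ^ 2 / 2 ^ a) := by
    intro a ha
    obtain ⟨b, rfl⟩ : ∃ b, a = b + 2 := ⟨a - 2, by grind⟩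
    have : (2 : ℝ) ^ b ≤ p ^ b := pow_le_pow_left₀ (by norm_num) hp b
    calc ((b + 2 : ℕ) : ℝ) ^ 2 / p ^ (b + 2)
        = ((b + 2 : ℕ) : ℝ) ^ 2 / (p ^ 2 * p ^ b) := by ring
      _ ≤ ((b + 2 : ℕ) : ℝ) ^ 2 / (p ^ 2 * 2 ^ b) := by gcongr
      _ = 4 / p ^ 2 * (((b + 2 : ℕ) : ℝ) ^ 2 / 2 ^ (b + 2)) := by field_simp; ring
  have hgeom : ∑ a ∈ Icc 2 K, (a : ℝ) ^ 2 / 2 ^ a ≤ 6 :=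
    calc ∑ a ∈ Icc 2 K, (a : ℝ) ^ 2 / 2 ^ a ≤ ∑ a ∈ range (K + 1), (a : ℝ) ^ 2 / 2 ^ a :=
          sum_le_sum_of_subset_of_nonneg (fun a ha ↦ by grind) fun _ _ _ ↦ by positivity
      _ ≤ 6 := by
          rw [sum_range_sq_div_two_pow, sub_le_self_iff]
          positivity
  calc ∑ a ∈ Icc 2 K, (a : ℝ) ^ 2 / p ^ a
      ≤ ∑ a ∈ Icc 2 K, 4 / p ^ 2 * ((a : ℝ) ^ 2 / 2 ^ a) := sum_le_sum hterm
    _ = 4 / p ^ 2 * ∑ a ∈ Icc 2 K, (a : ℝ) ^ 2 / 2 ^ a := by rw [mul_sum]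
    _ ≤ 4 / p ^ 2 * 6 := by gcongr
    _ = 24 / p ^ 2 := by ring

lemma sum_primes_inv_sq_le_one (N : ℕ) :
    ∑ p ∈ (Icc 1 N).filter Nat.Prime, 1 / (p : ℝ) ^ 2 ≤ 1 := by
  calc ∑ p ∈ (Icc 1 N).filter Nat.Prime, 1 / (p : ℝ) ^ 2
      ≤ ∑ i ∈ Ioo 1 (N + 1), ((i : ℝ) ^ 2)⁻¹ := by
        simp only [one_div]
        refine sum_le_sum_of_subset_of_nonneg (fun p hp ↦ ?_) fun _ _ _ ↦ by positivity
        have := (mem_filter.mp hp).2.two_le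
        grind
    _ ≤ 1 := (sum_Ioo_inv_sq_le (α := ℝ) 1 (N + 1)).trans_eq (by norm_num)

lemma summable_log_div_sq : Summable fun k : ℕ ↦ log k / (k : ℝ) ^ 2 := by
  refine ((summable_nat_rpow_inv.mpr (by norm_num : (1 : ℝ) < 3 / 2)).mul_left 2).of_nonneg_of_le
    (fun k ↦ by positivity) fun k ↦ ?_
  rcases Nat.eq_zero_or_pos k with rfl | hk
  · simp
  have hk' : (0 : ℝ) < k := by exact_mod_cast hk
  have hsplit : (k : ℝ) ^ 2 = (k : ℝ) ^ (1 / 2 : ℝ) * (k : ℝ) ^ (3 / 2 : ℝ) := by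
    rw [← rpow_add hk', ← rpow_natCast]
    norm_num
  rw [hsplit, div_le_iff₀ (by positivity)]
  calc log k ≤ (k : ℝ) ^ (1 / 2 : ℝ) / (1 / 2) := log_le_rpow_div hk'.le (by norm_num)
    _ = 2 * ((k : ℝ) ^ (3 / 2 : ℝ))⁻¹ * ((k : ℝ) ^ (1 / 2 : ℝ) * (k : ℝ) ^ (3 / 2 : ℝ)) := by
        field_simp

lemma sum_primes_log_div_sq_le_tsum (N : ℕ) :
    ∑ p ∈ (Icc 1 N).filter Nat.Prime, log p / (p : ℝ) ^ 2 ≤ ∑' k : ℕ, log k / (k : ℝ) ^ 2 :=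
  summable_log_div_sq.sum_le_tsum _ fun k _ ↦ by positivity

lemma sum_Icc_le_mul_sum_Icc_div {g : ℕ → ℝ} (hg : ∀ n, 0 ≤ g n) {Q N : ℕ} (hQN : Q ≤ N) :
    ∑ m ∈ Icc 1 Q, g m ≤ Q * ∑ m ∈ Icc 1 N, g m / m := by
  calc ∑ m ∈ Icc 1 Q, g m ≤ ∑ m ∈ Icc 1 Q, Q * (g m / m) := by
        refine sum_le_sum fun m hm ↦ ?_
        have hm1 : (1 : ℝ) ≤ m := by exact_mod_cast (mem_Icc.mp hm).1
        have hmQ : (m : ℝ) ≤ Q := by exact_mod_cast (mem_Icc.mp hm).2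
        rw [mul_div_assoc', le_div_iff₀ (by positivity)]
        nlinarith [hg m]
    _ = Q * ∑ m ∈ Icc 1 Q, g m / m := by rw [mul_sum]
    _ ≤ Q * ∑ m ∈ Icc 1 N, g m / m :=
        mul_le_mul_of_nonneg_left (sum_le_sum_of_subset_of_nonneg (Icc_subset_Icc_right hQN)
          fun m _ _ ↦ div_nonneg (hg m) m.cast_nonneg) Q.cast_nonneg

lemma sum_primes_log_mul_sum_Icc_div_le {g : ℕ → ℝ} (hg : ∀ n, 0 ≤ g n) (N : ℕ) :
    ∑ p ∈ (Icc 1 N).filter Nat.Prime, log p * ∑ m ∈ Icc 1 (N / p), g m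
      ≤ log 4 * (N * ∑ m ∈ Icc 1 N, g m / m) := by
  have hswap : ∑ p ∈ (Icc 1 N).filter Nat.Prime, log p * ∑ m ∈ Icc 1 (N / p), g m
      = ∑ m ∈ Icc 1 N, Chebyshev.theta (N / m : ℕ) * g m := by
    simp only [mul_sum, sum_mul, Chebyshev.theta, Nat.floor_natCast]
    refine sum_comm' fun p m ↦ ?_
    simp only [mem_filter, mem_Icc, mem_Ioc]
    constructor
    · rintro ⟨⟨-, hp⟩, hm1, hmN⟩
      have := (Nat.le_div_iff_mul_le hp.pos).mp hmN
      exact ⟨⟨⟨hp.pos, (Nat.le_div_iff_mul_le hm1).mpr (by nlinarith)⟩, hp⟩, hm1,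
        by nlinarith [hp.one_le]⟩
    · rintro ⟨⟨⟨-, hpN⟩, hp⟩, hm1, -⟩
      have := (Nat.le_div_iff_mul_le hm1).mp hpN
      exact ⟨⟨⟨hp.one_le, by nlinarith⟩, hp⟩, hm1,
        (Nat.le_div_iff_mul_le hp.pos).mpr (by nlinarith)⟩
  rw [hswap, mul_sum, mul_sum]
  refine sum_le_sum fun m _ ↦ ?_
  calc Chebyshev.theta (N / m : ℕ) * g m ≤ log 4 * (N / m : ℕ) * g m := by
        gcongr
        · exact hg m
        · exact Chebyshev.theta_le_log4_mul_x (Nat.cast_nonneg _)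
    _ ≤ log 4 * (N / m) * g m := mul_le_mul_of_nonneg_right
        (mul_le_mul_of_nonneg_left Nat.cast_div_le (log_nonneg (by norm_num))) (hg m)
    _ = log 4 * (N * (g m / m)) := by ring

lemma sum_Icc_sq_mul_sum_Icc_div_pow_le {g : ℕ → ℝ} (hg : ∀ n, 0 ≤ g n) {p : ℕ}
    (hp : 2 ≤ p) (N : ℕ) :
    ∑ a ∈ Icc 2 N, (a : ℝ) ^ 2 * ∑ m ∈ Icc 1 (N / p ^ a), g m
      ≤ 24 / (p : ℝ) ^ 2 * (N * ∑ m ∈ Icc 1 N, g m / m) := by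
  set T := ∑ m ∈ Icc 1 N, g m / m
  have hT : 0 ≤ T := sum_nonneg fun m _ ↦ div_nonneg (hg m) m.cast_nonneg
  calc ∑ a ∈ Icc 2 N, (a : ℝ) ^ 2 * ∑ m ∈ Icc 1 (N / p ^ a), g m
      ≤ ∑ a ∈ Icc 2 N, (a : ℝ) ^ 2 * ((N / (p : ℝ) ^ a) * T) := by
        gcongr with a
        calc ∑ m ∈ Icc 1 (N / p ^ a), g m ≤ (N / p ^ a : ℕ) * T :=
              sum_Icc_le_mul_sum_Icc_div hg (Nat.div_le_self N _)
          _ ≤ (N / (p : ℝ) ^ a) * T := by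
              gcongr
              exact_mod_cast Nat.cast_div_le
    _ = (∑ a ∈ Icc 2 N, (a : ℝ) ^ 2 / (p : ℝ) ^ a) * (N * T) := by
        rw [sum_mul]
        exact sum_congr rfl fun a _ ↦ by ring
    _ ≤ 24 / (p : ℝ) ^ 2 * (N * T) := by
        gcongr
        exact sum_Icc_sq_div_pow_le (by exact_mod_cast hp) N

lemma sum_primes_log_mul_sum_sq_mul_sum_Icc_div_pow_le {g : ℕ → ℝ} (hg : ∀ n, 0 ≤ g n)
    (N : ℕ) :
    ∑ p ∈ (Icc 1 N).filter Nat.Prime,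
        log p * ∑ a ∈ range (N + 1), (a : ℝ) ^ 2 * ∑ m ∈ Icc 1 (N / p ^ a), g m
      ≤ (log 4 + 24 * ∑' k : ℕ, log k / (k : ℝ) ^ 2) * (N * ∑ m ∈ Icc 1 N, g m / m) := by
  set P := (Icc 1 N).filter Nat.Prime
  set T := ∑ m ∈ Icc 1 N, g m / m
  have hsplit : ∀ p ∈ P,
      log p * ∑ a ∈ range (N + 1), (a : ℝ) ^ 2 * ∑ m ∈ Icc 1 (N / p ^ a), g m
        = log p * ∑ m ∈ Icc 1 (N / p), g m
          + log p * ∑ a ∈ Icc 2 N, (a : ℝ) ^ 2 * ∑ m ∈ Icc 1 (N / p ^ a), g m := by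
    intro p hp
    have hpN := mem_Icc.mp (mem_filter.mp hp).1
    rw [sum_range_succ_eq_add_add_sum_Icc _ (by omega)]
    simp only [Nat.cast_zero, Nat.cast_one, zero_pow two_ne_zero, zero_mul, zero_add, one_pow,
      one_mul, pow_one, mul_add]
  have htail : ∑ p ∈ P, log p * ∑ a ∈ Icc 2 N, (a : ℝ) ^ 2 * ∑ m ∈ Icc 1 (N / p ^ a), g m
      ≤ 24 * (∑' k : ℕ, log k / (k : ℝ) ^ 2) * (N * T) :=
    calc ∑ p ∈ P, log p * ∑ a ∈ Icc 2 N, (a : ℝ) ^ 2 * ∑ m ∈ Icc 1 (N / p ^ a), g m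
        ≤ ∑ p ∈ P, log p * (24 / (p : ℝ) ^ 2 * (N * T)) := by
          gcongr with p hp
          exact sum_Icc_sq_mul_sum_Icc_div_pow_le hg (mem_filter.mp hp).2.two_le N
      _ = ∑ p ∈ P, 24 * (log p / (p : ℝ) ^ 2) * (N * T) := sum_congr rfl fun p _ ↦ by ring
      _ = 24 * (∑ p ∈ P, log p / (p : ℝ) ^ 2) * (N * T) := by rw [← sum_mul, ← mul_sum]
      _ ≤ 24 * (∑' k : ℕ, log k / (k : ℝ) ^ 2) * (N * T) := by
          have : 0 ≤ T := sum_nonneg fun m _ ↦ div_nonneg (hg m) m.cast_nonneg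
          gcongr
          exact sum_primes_log_div_sq_le_tsum N
  rw [sum_congr rfl hsplit, sum_add_distrib, add_mul]
  exact add_le_add (sum_primes_log_mul_sum_Icc_div_le hg N) htail

lemma sum_Icc_mul_apply_ordCompl_le {w g : ℕ → ℝ} (hw : ∀ a, 0 ≤ w a) (hg : ∀ n, 0 ≤ g n)
    (p N : ℕ) :
    ∑ n ∈ Icc 1 N, w (n.factorization p) * g (ordCompl[p] n)
      ≤ ∑ a ∈ range (N + 1), w a * ∑ m ∈ Icc 1 (N / p ^ a), g m := by
  rw [← sum_fiberwise_of_maps_to (g := fun n ↦ n.factorization p) (t := range (N + 1))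
    fun n hn ↦ mem_range.mpr ((Nat.factorization_lt p (by grind)).trans_le (by grind))]
  refine sum_le_sum fun a _ ↦ ?_
  rw [sum_congr rfl fun n hn ↦ by rw [(mem_filter.mp hn).2], ← mul_sum]
  refine mul_le_mul_of_nonneg_left ?_ (hw a)
  have hfiber : ∀ n ∈ (Icc 1 N).filter (·.factorization p = a), p ^ a * (n / p ^ a) = n := by
    intro n hn
    obtain ⟨-, rfl⟩ := mem_filter.mp hn
    exact Nat.ordProj_mul_ordCompl_eq_self n p
  refine sum_comp_le_sum_of_injOn (g := g) (fun n ↦ n / p ^ a) ?_ ?_ fun m _ ↦ hg m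
  · intro n hn m hm hnm
    rw [← hfiber n hn, ← hfiber m hm]
    exact congrArg _ hnm
  · intro n hn
    obtain ⟨hn1, hnN⟩ := mem_Icc.mp (mem_filter.mp hn).1
    refine mem_Icc.mpr ⟨Nat.one_le_iff_ne_zero.mpr fun h ↦ ?_, Nat.div_le_div_right hnN⟩
    have := hfiber n hn
    simp only [h, mul_zero] at this
    omega

lemma mul_factorization_le {f : ℕ → ℝ} (hf0 : ∀ n, 0 ≤ f n)
    (hmul : ∀ m n : ℕ, m.Coprime n → f (m * n) = f m * f n) {C : ℝ} {p : ℕ} (hp : p.Prime)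
    (hpk : ∀ k : ℕ, 1 ≤ k → f (p ^ k) ≤ C * k) (n : ℕ) :
    f n * n.factorization p ≤ C * ((n.factorization p : ℝ) ^ 2 * f (ordCompl[p] n)) := by
  set a := n.factorization p
  rcases Nat.eq_zero_or_pos a with ha | ha
  · simp [ha]
  have hn : n ≠ 0 := by rintro rfl; simp [a] at ha
  have hcop : (p ^ a).Coprime (ordCompl[p] n) := (Nat.coprime_ordCompl hp hn).pow_left a
  calc f n * a = f (p ^ a) * f (ordCompl[p] n) * a := by
        rw [← hmul _ _ hcop, Nat.ordProj_mul_ordCompl_eq_self]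
    _ ≤ C * a * f (ordCompl[p] n) * a := by
        gcongr
        · exact hf0 _
        · exact hpk a ha
    _ = C * ((a : ℝ) ^ 2 * f (ordCompl[p] n)) := by ring

lemma sum_Icc_mul_log_natCast_le {f : ℕ → ℝ} (hf0 : ∀ n, 0 ≤ f n)
    (hmul : ∀ m n : ℕ, m.Coprime n → f (m * n) = f m * f n) {C : ℝ} (hC : 0 ≤ C)
    (hpk : ∀ p k : ℕ, p.Prime → 1 ≤ k → f (p ^ k) ≤ C * k) (N : ℕ) :
    ∑ n ∈ Icc 1 N, f n * log n
      ≤ C * (log 4 + 24 * ∑' k : ℕ, log k / (k : ℝ) ^ 2) * (N * ∑ n ∈ Icc 1 N, f n / n) := by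
  set P := (Icc 1 N).filter Nat.Prime
  calc ∑ n ∈ Icc 1 N, f n * log n
      = ∑ p ∈ P, log p * ∑ n ∈ Icc 1 N, f n * n.factorization p := by
        rw [sum_congr rfl fun n hn ↦ by
          rw [log_natCast_eq_sum_factorization_mul_log
            (Nat.primeFactors_subset_filter_prime_Icc hn)]]
        simp only [mul_sum]
        rw [sum_comm]
        exact sum_congr rfl fun p _ ↦ sum_congr rfl fun n _ ↦ by ring
    _ ≤ ∑ p ∈ P, log p *
          (C * ∑ a ∈ range (N + 1), (a : ℝ) ^ 2 * ∑ m ∈ Icc 1 (N / p ^ a), f m) := by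
        gcongr with p hp
        have hp := (mem_filter.mp hp).2
        calc ∑ n ∈ Icc 1 N, f n * n.factorization p
            ≤ ∑ n ∈ Icc 1 N, C * ((n.factorization p : ℝ) ^ 2 * f (ordCompl[p] n)) :=
              sum_le_sum fun n _ ↦ mul_factorization_le hf0 hmul hp (hpk p · hp) n
          _ = C * ∑ n ∈ Icc 1 N, (n.factorization p : ℝ) ^ 2 * f (ordCompl[p] n) := by
              rw [mul_sum]
          _ ≤ C * ∑ a ∈ range (N + 1), (a : ℝ) ^ 2 * ∑ m ∈ Icc 1 (N / p ^ a), f m := by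
              gcongr
              exact sum_Icc_mul_apply_ordCompl_le (w := fun a ↦ (a : ℝ) ^ 2)
                (fun _ ↦ by positivity) hf0 p N
    _ = C * ∑ p ∈ P,
          log p * ∑ a ∈ range (N + 1), (a : ℝ) ^ 2 * ∑ m ∈ Icc 1 (N / p ^ a), f m := by
        rw [mul_sum]
        exact sum_congr rfl fun p _ ↦ by ring
    _ ≤ C * ((log 4 + 24 * ∑' k : ℕ, log k / (k : ℝ) ^ 2) * (N * ∑ n ∈ Icc 1 N, f n / n)) := by
        gcongr
        exact sum_primes_log_mul_sum_sq_mul_sum_Icc_div_pow_le hf0 N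
    _ = _ := by ring

lemma sum_range_apply_pow_div_le_exp {f : ℕ → ℝ} (hf1 : f 1 = 1) {C : ℝ} (hC : 0 ≤ C)
    {p : ℕ} (hp : p.Prime) (hpk : ∀ k : ℕ, 1 ≤ k → f (p ^ k) ≤ C * k) {N : ℕ} (hN : 1 ≤ N) :
    ∑ a ∈ range (N + 1), f (p ^ a) / (p ^ a : ℕ) ≤ exp (f p / p + 24 * C / (p : ℝ) ^ 2) := by
  have htail : ∑ a ∈ Icc 2 N, f (p ^ a) / (p ^ a : ℕ) ≤ 24 * C / (p : ℝ) ^ 2 :=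
    calc ∑ a ∈ Icc 2 N, f (p ^ a) / (p ^ a : ℕ)
        ≤ ∑ a ∈ Icc 2 N, C * ((a : ℝ) ^ 2 / (p : ℝ) ^ a) := by
          refine sum_le_sum fun a ha ↦ ?_
          have ha1 : (1 : ℝ) ≤ a := by exact_mod_cast (show 1 ≤ a by grind)
          rw [Nat.cast_pow, mul_div_assoc']
          gcongr
          calc f (p ^ a) ≤ C * a := hpk a (by grind)
            _ ≤ C * a ^ 2 := by gcongr; nlinarith
      _ = C * ∑ a ∈ Icc 2 N, (a : ℝ) ^ 2 / (p : ℝ) ^ a := by rw [mul_sum]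
      _ ≤ C * (24 / (p : ℝ) ^ 2) := by
          gcongr
          exact sum_Icc_sq_div_pow_le (by exact_mod_cast hp.two_le) N
      _ = 24 * C / (p : ℝ) ^ 2 := by ring
  rw [sum_range_succ_eq_add_add_sum_Icc _ hN]
  simp only [pow_zero, pow_one, hf1, Nat.cast_one, div_one]
  linarith [add_one_le_exp (f p / p + 24 * C / (p : ℝ) ^ 2)]

lemma sum_Icc_div_le_exp {f : ℕ → ℝ} (hf0 : ∀ n, 0 ≤ f n) (hf1 : f 1 = 1)
    (hmul : ∀ m n : ℕ, m.Coprime n → f (m * n) = f m * f n) {C : ℝ} (hC : 0 ≤ C)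
    (hpk : ∀ p k : ℕ, p.Prime → 1 ≤ k → f (p ^ k) ≤ C * k) (N : ℕ) :
    ∑ n ∈ Icc 1 N, f n / n ≤ exp (∑ p ∈ (Icc 1 N).filter Nat.Prime, f p / p + 24 * C) := by
  set P := (Icc 1 N).filter Nat.Prime
  have hmul' : ∀ m n : ℕ, m.Coprime n → f (m * n) / (m * n : ℕ) = f m / m * (f n / n) :=
    fun m n hmn ↦ by rw [hmul m n hmn, Nat.cast_mul, mul_div_mul_comm]
  calc ∑ n ∈ Icc 1 N, f n / n
      ≤ ∏ p ∈ P, ∑ a ∈ range (N + 1), f (p ^ a) / (p ^ a : ℕ) :=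
        sum_Icc_le_prod_primes_sum_range_pow (h := fun n ↦ f n / n)
          (fun n ↦ div_nonneg (hf0 n) n.cast_nonneg) hmul' (by simp [hf1]) N
    _ ≤ ∏ p ∈ P, exp (f p / p + 24 * C / (p : ℝ) ^ 2) := by
        refine prod_le_prod (fun p _ ↦ sum_nonneg fun a _ ↦ div_nonneg (hf0 _) (by positivity))
          fun p hp ↦ ?_
        obtain ⟨hpN, hp⟩ := mem_filter.mp hp
        exact sum_range_apply_pow_div_le_exp hf1 hC hp (hpk p · hp)
          (hp.one_le.trans (mem_Icc.mp hpN).2)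
    _ = exp (∑ p ∈ P, f p / p + 24 * C * ∑ p ∈ P, 1 / (p : ℝ) ^ 2) := by
        rw [← exp_sum, sum_add_distrib, mul_sum]
        exact congrArg exp (congrArg _ (sum_congr rfl fun p _ ↦ by ring))
    _ ≤ exp (∑ p ∈ P, f p / p + 24 * C) := by
        have := sum_primes_inv_sq_le_one N
        exact exp_le_exp.mpr (by nlinarith)

lemma sum_Icc_mul_log_le {f : ℕ → ℝ} (hf0 : ∀ n, 0 ≤ f n) {x : ℝ} (hx : 0 < x) (N : ℕ) :
    (∑ n ∈ Icc 1 N, f n) * log x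
      ≤ ∑ n ∈ Icc 1 N, f n * log n + x * ∑ n ∈ Icc 1 N, f n / n := by
  rw [sum_mul, mul_sum, ← sum_add_distrib]
  refine sum_le_sum fun n hn ↦ ?_
  have hn : (0 : ℝ) < n := by exact_mod_cast (mem_Icc.mp hn).1
  have hsplit : log x = log n + log (x / n) := by
    rw [← log_mul hn.ne' (by positivity), mul_div_cancel₀ _ hn.ne']
  have hlog : log (x / n) ≤ x / n :=
    (log_le_sub_one_of_pos (by positivity)).trans (by linarith)
  calc f n * log x = f n * log n + f n * log (x / n) := by rw [hsplit, mul_add]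
    _ ≤ f n * log n + f n * (x / n) := by gcongr; exact hf0 n
    _ = f n * log n + x * (f n / n) := by ring

theorem stmt7 (C : ℝ) (hC : 0 < C) :
    ∃ c : ℝ, 0 < c ∧
      ∀ f : ℕ → ℝ, (∀ n, 0 ≤ f n) → f 1 = 1 →
        (∀ m n : ℕ, Nat.Coprime m n → f (m * n) = f m * f n) →
        (∀ p k : ℕ, p.Prime → 1 ≤ k → f (p ^ k) ≤ C * k) →
        ∀ x : ℝ, 2 ≤ x →
          ∑ n ∈ Finset.Icc 1 ⌊x⌋₊, f n ≤
            c * (x / Real.log x) *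
              Real.exp (∑ p ∈ (Finset.Icc 1 ⌊x⌋₊).filter Nat.Prime, f p / p) := by
  set K := C * (log 4 + 24 * ∑' k : ℕ, log k / (k : ℝ) ^ 2)
  have hK : 0 ≤ K := by positivity
  refine ⟨(1 + K) * exp (24 * C), by positivity, fun f hf0 hf1 hmul hpk x hx ↦ ?_⟩
  set N := ⌊x⌋₊
  set T := ∑ n ∈ Icc 1 N, f n / n
  have hx0 : 0 < x := by linarith
  have hT0 : 0 ≤ T := sum_nonneg fun n _ ↦ div_nonneg (hf0 n) n.cast_nonneg
  have hNT : (N : ℝ) * T ≤ x * T := mul_le_mul_of_nonneg_right (Nat.floor_le hx0.le) hT0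
  have hS : (∑ n ∈ Icc 1 N, f n) * log x ≤ (1 + K) * (x * T) := by
    have := mul_le_mul_of_nonneg_left hNT hK
    linarith [sum_Icc_mul_log_le hf0 hx0 N, sum_Icc_mul_log_natCast_le hf0 hmul hC.le hpk N]
  have hT := sum_Icc_div_le_exp hf0 hf1 hmul hC.le hpk N
  have hlogx : 0 < log x := log_pos (by linarith)
  calc ∑ n ∈ Icc 1 N, f n = (∑ n ∈ Icc 1 N, f n) * log x / log x := by field_simp
    _ ≤ (1 + K) * (x * T) / log x := by gcongr
    _ ≤ (1 + K) * (x * exp (∑ p ∈ (Icc 1 N).filter Nat.Prime, f p / p + 24 * C)) / log x := by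
        gcongr
    _ = _ := by rw [exp_add]; ring
end

section
/- If n ∈ 𝔾, then the number of nonzero ideals of 𝒪_K of absolute norm n equals the product, over the rational primes p dividing n that are split in K, of (v_p(n) + 1), where v_p(n) is the p-adic valuation of n. -/
open NumberField

/-- A rational prime `p` is split in `K` if `p 𝒪_K` is a product of two distinct
prime ideals. -/
def IsSplitIn (K : Type) [Field K] [NumberField K] (p : ℕ) : Prop :=
  ∃ P Q : Ideal (𝓞 K), P.IsPrime ∧ Q.IsPrime ∧ P ≠ Q ∧
    Ideal.span {(p : 𝓞 K)} = P * Q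

/-! The number of ideals of norm `n` is multiplicative in `n`: for coprime `m, n`, an ideal `I`
of norm `m * n` factors uniquely as `(I ⊔ (m)) * (I ⊔ (n))`, with factors of norms `m` and `n`.
An ideal of norm `p ^ e` divides `(p) ^ e`, and in a quadratic field `(p)` has norm `p ^ 2`.
So either `(p) = P * Q` with `P ≠ Q` of norm `p`, and the ideals of norm `p ^ e` are the `e + 1`
products `P ^ i * Q ^ j` with `i + j = e`; or `(p)` is a power of a single prime `P`, and then
divisors of powers of `P` are determined by their norm, so there is at most one ideal of norm
`p ^ e`, and exactly one as soon as some ideal has norm `n`. -/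

theorem Nat.eq_and_eq_of_dvd_of_dvd_of_mul_eq {a b m n : ℕ} (ha : a ∣ m) (hb : b ∣ n)
    (h : a * b = m * n) (hmn : m * n ≠ 0) : a = m ∧ b = n := by
  obtain ⟨hm, hn⟩ := Nat.mul_ne_zero_iff.1 hmn
  have ham := Nat.le_of_dvd (Nat.pos_of_ne_zero hm) ha
  have hbn := Nat.le_of_dvd (Nat.pos_of_ne_zero hn) hb
  have ha0 := Nat.pos_of_dvd_of_pos ha (Nat.pos_of_ne_zero hm)
  have hb0 := Nat.pos_of_dvd_of_pos hb (Nat.pos_of_ne_zero hn)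
  constructor <;> nlinarith

theorem Nat.eq_of_mul_eq_prime_sq {p a b : ℕ} (hp : p.Prime) (h : a * b = p ^ 2)
    (ha : a ≠ 1) (hb : b ≠ 1) : a = p := by
  obtain ⟨i, hi, rfl⟩ := (Nat.dvd_prime_pow hp).1 (Dvd.intro b h)
  interval_cases i
  · simp at ha
  · simp
  · exact absurd (Nat.eq_of_mul_eq_mul_left (pow_pos hp.pos 2) (h.trans (mul_one _).symm)) hb

theorem emultiplicity_pow_mul_pow {α : Type*} [CommMonoidWithZero α] [IsCancelMulZero α]
    {P Q : α} (hP : Prime P) (hPQ : ¬P ∣ Q) (i j : ℕ) : emultiplicity P (P ^ i * Q ^ j) = i := by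
  rw [emultiplicity_mul hP, emultiplicity_pow_self_of_prime hP,
    emultiplicity_eq_zero.2 (fun h => hPQ (hP.dvd_of_dvd_pow h)), add_zero]

namespace Ideal

theorem sup_mul_sup_eq_self {R : Type*} [CommRing R] {I A B : Ideal R}
    (hAB : A ⊔ B = ⊤) (hI : A * B ≤ I) : (I ⊔ A) * (I ⊔ B) = I := by
  refine le_antisymm ?_ ?_
  · rw [sup_mul, mul_sup, mul_sup]
    exact sup_le (sup_le mul_le_left mul_le_left) (sup_le mul_le_right hI)
  · calc I = I * A ⊔ I * B := by rw [← mul_sup, hAB, mul_top]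
      _ ≤ (I ⊔ A) * (I ⊔ B) := sup_le
          (mul_comm I A ▸ mul_mono le_sup_right le_sup_left) (mul_mono le_sup_left le_sup_right)

variable {S : Type*} [CommRing S] [IsDedekindDomain S] [Module.Free ℤ S]

theorem dvd_span_natCast_pow_of_absNorm_eq {I : Ideal S} {p e : ℕ} (hI : absNorm I = p ^ e) :
    I ∣ span {(p : S)} ^ e := by
  have := dvd_iff_le.2 (span_singleton_absNorm_le I)
  rwa [hI, Nat.cast_pow, ← span_singleton_pow] at this

theorem card_absNorm_eq_one : Nat.card {I : Ideal S // absNorm I = 1} = 1 :=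
  Nat.card_eq_one_iff_exists.2
    ⟨⟨⊤, absNorm_top⟩, fun I => Subtype.ext (absNorm_eq_one_iff.1 I.2)⟩

theorem sup_span_natCast_mul_sup_span_natCast {m n : ℕ} (hmn : m.Coprime n) {I : Ideal S}
    (hI : absNorm I = m * n) : (I ⊔ span {(m : S)}) * (I ⊔ span {(n : S)}) = I := by
  refine sup_mul_sup_eq_self ?_ ?_
  · rw [← isCoprime_iff_sup_eq, isCoprime_span_singleton_iff]
    exact hmn.cast
  · rw [span_singleton_mul_span_singleton, ← Nat.cast_mul, ← hI]
    exact span_singleton_absNorm_le I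

variable [Module.Finite ℤ S]

theorem span_natCast_ne_bot {p : ℕ} (hp : p ≠ 0) : span {(p : S)} ≠ ⊥ := fun h => by
  have := absNorm_span_natCast (S := S) p
  rw [h, absNorm_bot] at this
  exact pow_ne_zero _ hp this.symm

theorem one_lt_absNorm_of_prime {P : Ideal S} (hP : Prime P) : 1 < absNorm P := by
  have h0 : absNorm P ≠ 0 := absNorm_eq_zero_iff.not.2 hP.ne_zero
  have h1 : absNorm P ≠ 1 := absNorm_eq_one_iff.not.2 (fun h => hP.ne_one (h ▸ one_eq_top).symm)
  omega

theorem eq_of_absNorm_eq_of_dvd_prime_pow {P I J : Ideal S} (hP : Prime P) {a b : ℕ}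
    (hI : I ∣ P ^ a) (hJ : J ∣ P ^ b) (h : absNorm I = absNorm J) : I = J := by
  obtain ⟨i, -, hi⟩ := (dvd_prime_pow hP a).1 hI
  obtain ⟨j, -, hj⟩ := (dvd_prime_pow hP b).1 hJ
  rw [associated_iff_eq] at hi hj
  subst hi hj
  rw [map_pow, map_pow] at h
  rw [Nat.pow_right_injective (one_lt_absNorm_of_prime hP) h]

section Multiplicativity

variable {m n : ℕ}

theorem coprime_absNorm_sup_span_natCast (hmn : m.Coprime n) (I : Ideal S) :
    (absNorm (I ⊔ span {(m : S)})).Coprime n := by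
  refine Nat.Coprime.coprime_dvd_left ?_ (hmn.pow_left (Module.finrank ℤ S))
  rw [← absNorm_span_natCast]
  exact absNorm_dvd_absNorm_of_le le_sup_right

theorem absNorm_sup_span_natCast (hmn : m.Coprime n) (h0 : m * n ≠ 0) {I : Ideal S}
    (hI : absNorm I = m * n) :
    absNorm (I ⊔ span {(m : S)}) = m ∧ absNorm (I ⊔ span {(n : S)}) = n := by
  have hm : absNorm (I ⊔ span {(m : S)}) ∣ m :=
    (coprime_absNorm_sup_span_natCast hmn I).dvd_of_dvd_mul_right
      (hI ▸ absNorm_dvd_absNorm_of_le le_sup_left)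
  have hn : absNorm (I ⊔ span {(n : S)}) ∣ n :=
    (coprime_absNorm_sup_span_natCast hmn.symm I).dvd_of_dvd_mul_right
      (mul_comm m n ▸ hI ▸ absNorm_dvd_absNorm_of_le le_sup_left)
  refine Nat.eq_and_eq_of_dvd_of_dvd_of_mul_eq hm hn ?_ h0
  rw [← map_mul, sup_span_natCast_mul_sup_span_natCast hmn hI, hI]

theorem mul_sup_span_natCast_eq_left (hmn : m.Coprime n) {J J' : Ideal S}
    (hJ : absNorm J = m) (hJ' : absNorm J' = n) : J * J' ⊔ span {(m : S)} = J := by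
  have htop : J' ⊔ span {(m : S)} = ⊤ :=
    absNorm_eq_one_iff.1 ((coprime_absNorm_sup_span_natCast hmn J').eq_one_of_dvd
      (hJ' ▸ absNorm_dvd_absNorm_of_le le_sup_left))
  rw [mul_sup_eq_of_coprime_right htop, sup_eq_left, span_le, Set.singleton_subset_iff, ← hJ]
  exact absNorm_mem J

theorem card_absNorm_eq_mul (hmn : m.Coprime n) :
    Nat.card {I : Ideal S // absNorm I = m * n} =
      Nat.card {I : Ideal S // absNorm I = m} * Nat.card {I : Ideal S // absNorm I = n} := by
  rcases eq_or_ne (m * n) 0 with h0 | h0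
  · obtain ⟨rfl, rfl⟩ | ⟨rfl, rfl⟩ : m = 0 ∧ n = 1 ∨ m = 1 ∧ n = 0 := by
      rcases Nat.mul_eq_zero.1 h0 with rfl | rfl
      · exact .inl ⟨rfl, (Nat.coprime_zero_left n).1 hmn⟩
      · exact .inr ⟨(Nat.coprime_zero_right m).1 hmn, rfl⟩
    all_goals simp
  rw [← Nat.card_prod]
  refine Nat.card_congr
    { toFun I := (⟨I ⊔ span {(m : S)}, (absNorm_sup_span_natCast hmn h0 I.2).1⟩,
        ⟨I ⊔ span {(n : S)}, (absNorm_sup_span_natCast hmn h0 I.2).2⟩)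
      invFun J := ⟨J.1 * J.2, by rw [map_mul, J.1.2, J.2.2]⟩
      left_inv I := Subtype.ext (sup_span_natCast_mul_sup_span_natCast hmn I.2)
      right_inv := ?_ }
  rintro ⟨⟨J, hJ⟩, ⟨J', hJ'⟩⟩
  ext : 2
  · exact mul_sup_span_natCast_eq_left hmn hJ hJ'
  · exact (congrArg (· ⊔ _) (mul_comm J J')).trans (mul_sup_span_natCast_eq_left hmn.symm hJ' hJ)

theorem card_absNorm_eq_eq_prod_primeFactors (hn : n ≠ 0) :
    Nat.card {I : Ideal S // absNorm I = n} =
      ∏ p ∈ n.primeFactors, Nat.card {I : Ideal S // absNorm I = p ^ n.factorization p} := by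
  rw [Nat.multiplicative_factorization (fun n => Nat.card {I : Ideal S // absNorm I = n})
    (fun _ _ => card_absNorm_eq_mul) card_absNorm_eq_one hn,
    Nat.prod_factorization_eq_prod_primeFactors]

end Multiplicativity

section PrimePower

variable {p : ℕ}

theorem subsingleton_absNorm_eq_pow {P : Ideal S} (hP : Prime P) {k : ℕ}
    (h : span {(p : S)} = P ^ k) (e : ℕ) : Subsingleton {I : Ideal S // absNorm I = p ^ e} := by
  have hdvd {I : Ideal S} (hI : absNorm I = p ^ e) : I ∣ P ^ (k * e) := by
    rw [pow_mul, ← h]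
    exact dvd_span_natCast_pow_of_absNorm_eq hI
  refine ⟨fun I J => Subtype.ext ?_⟩
  exact eq_of_absNorm_eq_of_dvd_prime_pow hP (hdvd I.2) (hdvd J.2) (I.2.trans J.2.symm)

open Finset.HasAntidiagonal in
theorem card_absNorm_eq_pow_of_span_eq_mul {P Q : Ideal S} (hP : Prime P) (hQ : Prime Q)
    (hPQ : P ≠ Q) (h : span {(p : S)} = P * Q) (hnP : absNorm P = p) (hnQ : absNorm Q = p)
    (e : ℕ) : Nat.card {I : Ideal S // absNorm I = p ^ e} = e + 1 := by
  have hp : 1 < p := hnP ▸ one_lt_absNorm_of_prime hP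
  have hPQdvd : ¬P ∣ Q := fun hdvd =>
    hPQ ((((isPrime_of_prime hQ).isMaximal hQ.ne_zero).eq_of_le (isPrime_of_prime hP).ne_top
      (dvd_iff_le.1 hdvd)).symm)
  have hnorm (i j : ℕ) : absNorm (P ^ i * Q ^ j) = p ^ (i + j) := by
    rw [map_mul, map_pow, map_pow, hnP, hnQ, pow_add]
  rw [← Finset.Nat.card_antidiagonal e, ← Nat.card_eq_finsetCard]
  refine (Nat.card_eq_of_bijective (fun ij : antidiagonal e =>
    ⟨P ^ ij.1.1 * Q ^ ij.1.2, (hnorm _ _).trans (congrArg _ (mem_antidiagonal.1 ij.2))⟩)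
      ⟨?_, ?_⟩).symm
  · rintro ⟨⟨i, j⟩, hij⟩ ⟨⟨k, l⟩, hkl⟩ hik
    have hik : i = k := by
      simpa [emultiplicity_pow_mul_pow hP hPQdvd] using congrArg (emultiplicity P ·.1) hik
    have hij := mem_antidiagonal.1 hij
    have hkl := mem_antidiagonal.1 hkl
    exact Subtype.ext (Prod.ext hik (show j = l by omega))
  · rintro ⟨I, hI⟩
    have hIdvd : I ∣ P ^ e * Q ^ e := mul_pow P Q e ▸ h ▸ dvd_span_natCast_pow_of_absNorm_eq hI
    obtain ⟨A, B, hA, hB, rfl⟩ := exists_dvd_and_dvd_of_dvd_mul hIdvd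
    obtain ⟨i, -, hi⟩ := (dvd_prime_pow hP e).1 hA
    obtain ⟨j, -, hj⟩ := (dvd_prime_pow hQ e).1 hB
    rw [associated_iff_eq] at hi hj
    subst hi hj
    have hij : i + j = e := Nat.pow_right_injective hp ((hnorm i j).symm.trans hI)
    exact ⟨⟨(i, j), mem_antidiagonal.2 hij⟩, rfl⟩

variable (hS : Module.finrank ℤ S = 2) (hp : p.Prime)
include hS hp

theorem absNorm_eq_of_span_eq_mul {I J : Ideal S} (h : span {(p : S)} = I * J) (hI : I ≠ ⊤)
    (hJ : J ≠ ⊤) : absNorm I = p := by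
  refine Nat.eq_of_mul_eq_prime_sq hp ?_ (absNorm_eq_one_iff.not.2 hI) (absNorm_eq_one_iff.not.2 hJ)
  rw [← map_mul, ← h, absNorm_span_natCast, hS]

theorem prime_or_exists_span_natCast_eq_mul :
    Prime (span {(p : S)}) ∨ ∃ P Q : Ideal S, Prime P ∧ Prime Q ∧ span {(p : S)} = P * Q := by
  have hA : absNorm (span {(p : S)}) = p ^ 2 := by rw [absNorm_span_natCast, hS]
  have hA0 : span {(p : S)} ≠ ⊥ := span_natCast_ne_bot hp.ne_zero
  have hA1 : ¬IsUnit (span {(p : S)}) := fun hu => by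
    rw [isUnit_iff, ← absNorm_eq_one_iff, hA] at hu
    exact absurd hu (Nat.one_lt_pow two_ne_zero hp.one_lt).ne'
  obtain ⟨P, hP, B, hPB⟩ := WfDvdMonoid.exists_irreducible_factor hA1 hA0
  replace hP := hP.prime
  by_cases hB : B = ⊤
  · left
    rwa [hPB, hB, mul_top]
  · right
    have hnB : absNorm B = p :=
      absNorm_eq_of_span_eq_mul hS hp (hPB.trans (mul_comm P B)) hB (isPrime_of_prime hP).ne_top
    have hB0 : B ≠ ⊥ := fun h0 => hA0 (by rw [hPB, h0, mul_bot])
    exact ⟨P, B, hP, prime_of_isPrime hB0 (isPrime_of_irreducible_absNorm (hnB ▸ hp)), hPB⟩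

theorem exists_span_natCast_eq_prime_pow_of_not_split
    (hns : ¬∃ P Q : Ideal S, P.IsPrime ∧ Q.IsPrime ∧ P ≠ Q ∧ span {(p : S)} = P * Q) :
    ∃ P : Ideal S, Prime P ∧ ∃ k, span {(p : S)} = P ^ k := by
  rcases prime_or_exists_span_natCast_eq_mul hS hp with h | ⟨P, Q, hP, hQ, h⟩
  · exact ⟨_, h, 1, (pow_one _).symm⟩
  · obtain rfl : P = Q := by_contra fun hPQ =>
      hns ⟨P, Q, isPrime_of_prime hP, isPrime_of_prime hQ, hPQ, h⟩
    exact ⟨P, hP, 2, h.trans (sq P).symm⟩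

theorem card_absNorm_eq_pow_of_split {P Q : Ideal S} (hP : P.IsPrime)
    (hQ : Q.IsPrime) (hPQ : P ≠ Q) (h : span {(p : S)} = P * Q) (e : ℕ) :
    Nat.card {I : Ideal S // absNorm I = p ^ e} = e + 1 := by
  obtain ⟨hP0, hQ0⟩ := mul_ne_zero_iff.1 (h ▸ span_natCast_ne_bot hp.ne_zero : P * Q ≠ ⊥)
  exact card_absNorm_eq_pow_of_span_eq_mul (prime_of_isPrime hP0 hP) (prime_of_isPrime hQ0 hQ)
    hPQ h (absNorm_eq_of_span_eq_mul hS hp h hP.ne_top hQ.ne_top)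
    (absNorm_eq_of_span_eq_mul hS hp (h.trans (mul_comm P Q)) hQ.ne_top hP.ne_top) e

end PrimePower

end Ideal

open scoped Classical in
theorem stmt9_general (K : Type) [Field K] [NumberField K]
    (hdeg : Module.finrank ℚ K = 2)
    (n : ℕ)
    (hG : ∃ I : Ideal (𝓞 K), I ≠ 0 ∧ Ideal.absNorm I = n) :
    Nat.card {I : Ideal (𝓞 K) // I ≠ 0 ∧ Ideal.absNorm I = n} =
      ∏ p ∈ n.primeFactors.filter (fun p => IsSplitIn K p), (n.factorization p + 1) := by
  have hS : Module.finrank ℤ (𝓞 K) = 2 := (RingOfIntegers.rank K).trans hdeg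
  obtain ⟨I₀, hI₀, hI₀n⟩ := hG
  have hn : n ≠ 0 := hI₀n ▸ Ideal.absNorm_eq_zero_iff.not.2 hI₀
  have hcard : Nat.card {I : Ideal (𝓞 K) // I ≠ 0 ∧ Ideal.absNorm I = n} =
      Nat.card {I : Ideal (𝓞 K) // Ideal.absNorm I = n} :=
    Nat.card_congr <| Equiv.subtypeEquivRight fun I => and_iff_right_of_imp fun hI =>
      Ideal.absNorm_eq_zero_iff.not.1 (hI ▸ hn)
  have hpos : Nat.card {I : Ideal (𝓞 K) // Ideal.absNorm I = n} ≠ 0 :=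
    Nat.card_ne_zero.2 ⟨⟨⟨I₀, hI₀n⟩⟩, (Ideal.finite_setOfPred_absNorm_eq n).to_subtype⟩
  rw [Ideal.card_absNorm_eq_eq_prod_primeFactors hn] at hpos
  rw [hcard, Ideal.card_absNorm_eq_eq_prod_primeFactors hn,
    ← Finset.prod_filter_mul_prod_filter_not n.primeFactors (IsSplitIn K)]
  rw [Finset.prod_eq_one (s := n.primeFactors.filter (¬IsSplitIn K ·)), mul_one]
  · refine Finset.prod_congr rfl fun p hp => ?_
    obtain ⟨hpn, P, Q, hP, hQ, hPQ, h⟩ := Finset.mem_filter.1 hp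
    exact Ideal.card_absNorm_eq_pow_of_split hS
      (Nat.prime_of_mem_primeFactors hpn) hP hQ hPQ h _
  · intro p hp
    obtain ⟨hpn, hns⟩ := Finset.mem_filter.1 hp
    obtain ⟨P, hP, k, h⟩ :=
      Ideal.exists_span_natCast_eq_prime_pow_of_not_split hS (Nat.prime_of_mem_primeFactors hpn) hns
    exact Nat.card_eq_one_iff_unique.2 ⟨Ideal.subsingleton_absNorm_eq_pow hP h _,
      (Nat.card_ne_zero.1 (Finset.prod_ne_zero_iff.1 hpos p hpn)).1⟩

open scoped Classical in
theorem stmt9 (K : Type) [Field K] [NumberField K]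
    (hdeg : Module.finrank ℚ K = 2)
    (himg : ∀ v : InfinitePlace K, v.IsComplex)
    (n : ℕ) (hn : 0 < n)
    (hG : ∃ I : Ideal (𝓞 K), I ≠ 0 ∧ Ideal.absNorm I = n) :
    Nat.card {I : Ideal (𝓞 K) // I ≠ 0 ∧ Ideal.absNorm I = n} =
      ∏ p ∈ n.primeFactors.filter (fun p => IsSplitIn K p), (n.factorization p + 1) :=
  stmt9_general K hdeg n hG
end

section
/- Let a, b, c be integers with a > 0, gcd(a, b, c) = 1 and b² − 4ac = −d. Then, in 𝒪_K, the product of the ideal generated by a and (b + √−d)/2 with the ideal generated by a and (b − √−d)/2 equals the principal ideal generated by a. -/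
open NumberField

theorem stmt13 (K : Type) [Field K] [NumberField K]
    (hdeg : Module.finrank ℚ K = 2)
    (himg : ∀ v : InfinitePlace K, v.IsComplex)
    (d : ℤ) (hd : 0 < d) (hdisc : NumberField.discr K = -d)
    (σ : K →+* ℂ) (ω : K) (hω : ω ^ 2 = (-d : ℤ)) (him : 0 < (σ ω).im)
    (a b c : ℤ) (ha : 0 < a) (hgcd : Int.gcd (Int.gcd a b) c = 1)
    (hdisc' : b ^ 2 - 4 * a * c = -d)
    (β γ : 𝓞 K) (hβ : (β : K) = ((b : K) + ω) / 2) (hγ : (γ : K) = ((b : K) - ω) / 2) :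
    Ideal.span {(a : 𝓞 K), β} * Ideal.span {(a : 𝓞 K), γ} =
      Ideal.span {(a : 𝓞 K)} := by
  have cast_int : ∀ n : ℤ, ((n : 𝓞 K) : K) = (n : K) := fun n => by
    rw [show ((n : 𝓞 K) : K) = algebraMap (𝓞 K) K (n : 𝓞 K) from rfl, map_intCast]
  have hβγadd : β + γ = (b : 𝓞 K) := by
    refine NumberField.RingOfIntegers.ext ?_
    push_cast [hβ, hγ, cast_int]
    ring
  have hβγmul : β * γ = (a : 𝓞 K) * (c : 𝓞 K) := by
    refine NumberField.RingOfIntegers.ext ?_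
    push_cast [hβ, hγ, cast_int]
    have hbd : (b : K) ^ 2 + (d : K) = 4 * a * c := by
      have h := congrArg (fun t : ℤ => (t : K)) hdisc'
      push_cast at h
      linear_combination h
    have hω' : ω ^ 2 = -(d : K) := by push_cast at hω; exact hω
    field_simp
    linear_combination hbd - hω'
  -- Bezout for gcd(a,b,c) = 1
  obtain ⟨x, y, z, hxyz⟩ : ∃ x y z : ℤ, x * a + y * b + z * c = 1 := by
    have h1 : IsCoprime ((Int.gcd a b : ℤ)) c := Int.isCoprime_iff_gcd_eq_one.mpr hgcd
    obtain ⟨m, n, hmn⟩ := h1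
    have hab := Int.gcd_eq_gcd_ab a b
    exact ⟨m * Int.gcdA a b, m * Int.gcdB a b, n, by rw [hab] at hmn; linarith [hmn]⟩
  have hOK : (x : 𝓞 K) * a + y * b + z * c = 1 := by
    have := congrArg (fun t : ℤ => (t : 𝓞 K)) hxyz
    push_cast at this
    exact this
  rw [Ideal.span_pair_mul_span_pair]
  apply le_antisymm
  · rw [Ideal.span_le]
    intro u hu
    simp only [Set.mem_insert_iff, Set.mem_singleton_iff] at hu
    rcases hu with h | h | h | h <;> subst h <;> rw [SetLike.mem_coe, Ideal.mem_span_singleton]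
    · exact dvd_mul_right _ _
    · exact dvd_mul_right _ _
    · exact dvd_mul_left _ _
    · rw [hβγmul]; exact dvd_mul_right _ _
  · rw [Ideal.span_singleton_le_iff_mem]
    have key : (a : 𝓞 K) = x * ((a : 𝓞 K) * a) + y * (β * a) + y * ((a : 𝓞 K) * γ)
        + z * (β * γ) := by
      linear_combination -(a : 𝓞 K) * hOK - (y * a) * hβγadd - z * hβγmul
    set I := Ideal.span {(a : 𝓞 K) * a, (a : 𝓞 K) * γ, β * a, β * γ} with hI
    rw [key]
    have h1 : (a : 𝓞 K) * a ∈ I := hI ▸ Ideal.subset_span (by simp)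
    have h2 : (a : 𝓞 K) * γ ∈ I := hI ▸ Ideal.subset_span (by simp)
    have h3 : β * a ∈ I := hI ▸ Ideal.subset_span (by simp)
    have h4 : β * γ ∈ I := hI ▸ Ideal.subset_span (by simp)
    exact Ideal.add_mem _ (Ideal.add_mem _ (Ideal.add_mem _ (Ideal.mul_mem_left _ _ h1)
      (Ideal.mul_mem_left _ _ h3)) (Ideal.mul_mem_left _ _ h2)) (Ideal.mul_mem_left _ _ h4)
end

section
/- Suppose every element of the ideal class group of 𝒪_K is its own inverse (equivalently, the class group has exponent dividing 2; this is the 'one class per genus' condition). Then any two nonzero ideals I and J of 𝒪_K with the same absolute norm lie in the same ideal class. Consequently, if some ideal of absolute norm n lies in a class C, then every ideal of absolute norm n lies in C, i.e. the number of ideals of norm n in the class C equals the total number of ideals of norm n. -/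
/-!
As every ideal class is its own inverse, `[I] = [J]` amounts to `I * J` being principal, and
`I * J` has square norm when `N I = N J`. So it suffices that in a quadratic field whose ideals all
have principal squares, every ideal `A` of square norm is principal. By induction on the norm, it
is enough to split off a principal factor of `A` of norm `p²`. Take a prime `P ∣ A` above `p`:
either `P = (p)`, or `N P = p`, and then the square norm forces a second prime `Q ∣ A / P` above
`p`; now `Q = (p)`, or `P * Q` is `P²` or `(p)`, principal in every case.
-/

open NumberField Ideal nonZeroDivisors

theorem Nat.Prime.dvd_of_isSquare_mul {p m : ℕ} (hp : p.Prime) (h : IsSquare (p * m)) :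
    p ∣ m := by
  obtain ⟨k, hk⟩ := h
  have hpk : p ∣ k := (hp.dvd_mul.mp (hk ▸ dvd_mul_right p m)).elim id id
  exact Nat.dvd_of_mul_dvd_mul_left hp.pos (hk ▸ mul_dvd_mul hpk hpk)

theorem Nat.isSquare_of_isSquare_sq_mul {a m : ℕ} (ha : a ≠ 0) (h : IsSquare (a ^ 2 * m)) :
    IsSquare m := by
  obtain ⟨k, hk⟩ := h
  obtain ⟨t, rfl⟩ : a ∣ k :=
    (Nat.pow_dvd_pow_iff two_ne_zero).mp ⟨m, by rw [sq k, ← hk]⟩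
  exact ⟨t, Nat.eq_of_mul_eq_mul_left (pow_pos (Nat.pos_of_ne_zero ha) 2) (by rw [hk]; ring)⟩

theorem Submodule.IsPrincipal.mul {R : Type*} [CommSemiring R] {I J : Ideal R}
    (hI : I.IsPrincipal) (hJ : J.IsPrincipal) : (I * J).IsPrincipal := by
  obtain ⟨a, rfl⟩ := hI
  obtain ⟨b, rfl⟩ := hJ
  exact ⟨a * b, by simp only [span_singleton_mul_span_singleton]⟩

theorem Ideal.isPrincipal_sq_of_forall_inv_eq_self {R : Type*} [CommRing R] [IsDedekindDomain R]
    (h : ∀ C : ClassGroup R, C⁻¹ = C) (I : Ideal R) : (I ^ 2).IsPrincipal := by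
  rcases eq_or_ne I ⊥ with rfl | hI
  · simpa using bot_isPrincipal
  have hI' := mem_nonZeroDivisors_of_ne_zero hI
  rw [← ClassGroup.mk0_eq_one_iff (pow_mem hI' 2), ← SubmonoidClass.mk_pow, map_pow, sq]
  nth_rewrite 1 [← h (ClassGroup.mk0 ⟨I, hI'⟩)]
  exact inv_mul_cancel _

namespace Ideal

variable {S : Type*} [CommRing S] [IsDedekindDomain S] [Module.Free ℤ S] [Module.Finite ℤ S]

theorem eq_of_dvd_of_absNorm_eq {I J : Ideal S} (h : I ∣ J) (hn : absNorm I = absNorm J) :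
    I = J := by
  obtain ⟨C, rfl⟩ := h
  rcases eq_or_ne I ⊥ with rfl | hI
  · simp
  rw [map_mul, eq_comm, mul_eq_left₀ (absNorm_eq_zero_iff.not.mpr hI), absNorm_eq_one_iff] at hn
  rw [hn, mul_top]

theorem absNorm_dvd_sq_of_natCast_mem (hrank : Module.finrank ℤ S = 2) {I : Ideal S} {p : ℕ}
    (h : (p : S) ∈ I) : absNorm I ∣ p ^ 2 :=
  hrank ▸ absNorm_span_natCast (S := S) p ▸
    absNorm_dvd_absNorm_of_le ((span_singleton_le_iff_mem _).mpr h)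

theorem absNorm_eq_or_eq_span_of_natCast_mem (hrank : Module.finrank ℤ S = 2) (P : Ideal S)
    [P.IsMaximal] {p : ℕ} (hp : p.Prime) (h : (p : S) ∈ P) :
    absNorm P = p ∨ P = span {(p : S)} := by
  obtain ⟨m, hm, hPm⟩ := (Nat.dvd_prime_pow hp).mp (absNorm_dvd_sq_of_natCast_mem hrank h)
  have hm0 : m ≠ 0 := by
    rintro rfl
    exact IsMaximal.ne_top ‹_› (absNorm_eq_one_iff.mp (hPm.trans (pow_zero p)))
  obtain rfl | rfl : m = 1 ∨ m = 2 := by omega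
  · exact .inl (hPm.trans (pow_one p))
  · refine .inr <| eq_of_dvd_of_absNorm_eq
      (dvd_iff_le.mpr ((span_singleton_le_iff_mem _).mpr h)) ?_
    rw [hPm, absNorm_span_natCast, hrank]

theorem mul_eq_span_of_absNorm_eq (hrank : Module.finrank ℤ S = 2) {P Q : Ideal S}
    [hPmax : P.IsMaximal] [hQmax : Q.IsMaximal] (hPQ : P ≠ Q) {p : ℕ}
    (hP : absNorm P = p) (hQ : absNorm Q = p) : P * Q = span {(p : S)} := by
  have hle : span {(p : S)} ≤ P * Q := by
    rw [mul_eq_inf_of_coprime (hPmax.coprime_of_ne hQmax hPQ), span_singleton_le_iff_mem]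
    exact ⟨hP ▸ absNorm_mem P, hQ ▸ absNorm_mem Q⟩
  refine eq_of_dvd_of_absNorm_eq (dvd_iff_le.mpr hle) ?_
  rw [map_mul, hP, hQ, absNorm_span_natCast, hrank, sq]

theorem isPrincipal_mul_of_absNorm_eq (hrank : Module.finrank ℤ S = 2)
    (hsq : ∀ I : Ideal S, (I ^ 2).IsPrincipal) {P Q : Ideal S} [P.IsMaximal] [Q.IsMaximal]
    {p : ℕ} (hP : absNorm P = p) (hQ : absNorm Q = p) : (P * Q).IsPrincipal := by
  rcases eq_or_ne P Q with rfl | hPQ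
  · exact sq P ▸ hsq P
  · rw [mul_eq_span_of_absNorm_eq hrank hPQ hP hQ]
    exact ⟨_, rfl⟩

theorem exists_isPrincipal_dvd_of_isSquare_absNorm (hrank : Module.finrank ℤ S = 2)
    (hsq : ∀ I : Ideal S, (I ^ 2).IsPrincipal) {A : Ideal S} (hA : A ≠ ⊤)
    (h : IsSquare (absNorm A)) :
    ∃ D : Ideal S, ∃ p : ℕ, p.Prime ∧ D ∣ A ∧ absNorm D = p ^ 2 ∧ D.IsPrincipal := by
  obtain ⟨P, hPmax, hAP⟩ := exists_le_maximal A hA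
  obtain ⟨p, -, -, hpP, hp, -⟩ := exists_prime_and_absNorm_eq_pow P
  have hspan : absNorm (span {(p : S)}) = p ^ 2 := by rw [absNorm_span_natCast, hrank]
  rcases absNorm_eq_or_eq_span_of_natCast_mem hrank P hp hpP with hPp | rfl
  swap
  · exact ⟨_, p, hp, dvd_iff_le.mpr hAP, hspan, ⟨_, rfl⟩⟩
  obtain ⟨B, rfl⟩ := dvd_iff_le.mpr hAP
  rw [map_mul, hPp] at h
  obtain ⟨Q, hQmax, hQp, hQB⟩ :=
    exists_isMaximal_dvd_of_dvd_absNorm' hp B (hp.dvd_of_isSquare_mul h)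
  have hpQ : (p : S) ∈ Q := by
    simpa [under_def] using (hQp ▸ mem_span_singleton_self (p : ℤ) : (p : ℤ) ∈ Q.under ℤ)
  rcases absNorm_eq_or_eq_span_of_natCast_mem hrank Q hp hpQ with hQ | rfl
  · refine ⟨P * Q, p, hp, mul_dvd_mul_left P hQB, ?_,
      isPrincipal_mul_of_absNorm_eq hrank hsq hPp hQ⟩
    rw [map_mul, hPp, hQ, sq]
  · exact ⟨_, p, hp, hQB.trans (dvd_mul_left B P), hspan, ⟨_, rfl⟩⟩

theorem isPrincipal_of_isSquare_absNorm (hrank : Module.finrank ℤ S = 2)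
    (hsq : ∀ I : Ideal S, (I ^ 2).IsPrincipal) (A : Ideal S) (h : IsSquare (absNorm A)) :
    A.IsPrincipal := by
  induction hn : absNorm A using Nat.strong_induction_on generalizing A with
  | _ n ih =>
  rcases eq_or_ne A ⊥ with rfl | hA0
  · exact bot_isPrincipal
  rcases eq_or_ne A ⊤ with rfl | hA1
  · exact top_isPrincipal
  obtain ⟨D, p, hp, ⟨B, rfl⟩, hD, hDp⟩ :=
    exists_isPrincipal_dvd_of_isSquare_absNorm hrank hsq hA1 h
  rw [map_mul, hD] at h hn
  have hB : 0 < absNorm B := Nat.pos_of_ne_zero fun hB ↦ hA0 (by simp [absNorm_eq_zero_iff.mp hB])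
  refine hDp.mul (ih _ ?_ B (Nat.isSquare_of_isSquare_sq_mul hp.ne_zero h) rfl)
  exact hn ▸ lt_mul_left hB (Nat.one_lt_pow two_ne_zero hp.one_lt)

end Ideal

theorem ClassGroup.mk0_eq_of_isPrincipal_mul {R : Type*} [CommRing R] [IsDedekindDomain R]
    (h : ∀ C : ClassGroup R, C⁻¹ = C) {I J : (Ideal R)⁰}
    (hIJ : (I * J : Ideal R).IsPrincipal) :
    ClassGroup.mk0 I = ClassGroup.mk0 J := by
  rw [← h (ClassGroup.mk0 J), eq_inv_iff_mul_eq_one, ← map_mul]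
  exact (ClassGroup.mk0_eq_one_iff _).mpr hIJ

theorem ClassGroup.mk0_eq_of_absNorm_eq {S : Type*} [CommRing S] [IsDedekindDomain S]
    [Module.Free ℤ S] [Module.Finite ℤ S] (hrank : Module.finrank ℤ S = 2)
    (h : ∀ C : ClassGroup S, C⁻¹ = C) {I J : (Ideal S)⁰}
    (hIJ : absNorm (I : Ideal S) = absNorm (J : Ideal S)) :
    ClassGroup.mk0 I = ClassGroup.mk0 J :=
  mk0_eq_of_isPrincipal_mul h <|
    isPrincipal_of_isSquare_absNorm hrank (isPrincipal_sq_of_forall_inv_eq_self h) _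
      ⟨absNorm (J : Ideal S), by rw [map_mul, hIJ]⟩

theorem stmt14_general (K : Type) [Field K] [NumberField K]
    (hdeg : Module.finrank ℚ K = 2)
    (hexp : ∀ C : ClassGroup (𝓞 K), C⁻¹ = C) :
    (∀ (I J : Ideal (𝓞 K)) (hI : I ≠ 0) (hJ : J ≠ 0),
        Ideal.absNorm I = Ideal.absNorm J →
        ClassGroup.mk0 ⟨I, mem_nonZeroDivisors_of_ne_zero hI⟩ =
          ClassGroup.mk0 ⟨J, mem_nonZeroDivisors_of_ne_zero hJ⟩) ∧
    (∀ (n : ℕ) (C : ClassGroup (𝓞 K)),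
        (∃ (I : Ideal (𝓞 K)) (hI : I ≠ 0), Ideal.absNorm I = n ∧
          ClassGroup.mk0 ⟨I, mem_nonZeroDivisors_of_ne_zero hI⟩ = C) →
        Nat.card {I : Ideal (𝓞 K) // ∃ hI : I ≠ 0, Ideal.absNorm I = n ∧
            ClassGroup.mk0 ⟨I, mem_nonZeroDivisors_of_ne_zero hI⟩ = C} =
          Nat.card {I : Ideal (𝓞 K) // I ≠ 0 ∧ Ideal.absNorm I = n}) := by
  have hrank : Module.finrank ℤ (𝓞 K) = 2 := (RingOfIntegers.rank K).trans hdeg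
  have same_class : ∀ (I J : Ideal (𝓞 K)) (hI : I ≠ 0) (hJ : J ≠ 0),
      absNorm I = absNorm J → ClassGroup.mk0 ⟨I, mem_nonZeroDivisors_of_ne_zero hI⟩ =
        ClassGroup.mk0 ⟨J, mem_nonZeroDivisors_of_ne_zero hJ⟩ := fun I J hI hJ ↦
    ClassGroup.mk0_eq_of_absNorm_eq (I := ⟨I, _⟩) (J := ⟨J, _⟩) hrank hexp
  refine ⟨same_class, ?_⟩
  rintro n C ⟨I₀, hI₀, hn₀, rfl⟩
  exact Nat.card_congr <| Equiv.subtypeEquivRight fun I ↦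
    ⟨fun ⟨hI, hn, _⟩ ↦ ⟨hI, hn⟩,
      fun ⟨hI, hn⟩ ↦ ⟨hI, hn, same_class I I₀ hI hI₀ (hn.trans hn₀.symm)⟩⟩

theorem stmt14 (K : Type) [Field K] [NumberField K]
    (hdeg : Module.finrank ℚ K = 2)
    (himg : ∀ v : InfinitePlace K, v.IsComplex)
    (hexp : ∀ C : ClassGroup (𝓞 K), C⁻¹ = C) :
    (∀ (I J : Ideal (𝓞 K)) (hI : I ≠ 0) (hJ : J ≠ 0),
        Ideal.absNorm I = Ideal.absNorm J →
        ClassGroup.mk0 ⟨I, mem_nonZeroDivisors_of_ne_zero hI⟩ =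
          ClassGroup.mk0 ⟨J, mem_nonZeroDivisors_of_ne_zero hJ⟩) ∧
    (∀ (n : ℕ) (C : ClassGroup (𝓞 K)),
        (∃ (I : Ideal (𝓞 K)) (hI : I ≠ 0), Ideal.absNorm I = n ∧
          ClassGroup.mk0 ⟨I, mem_nonZeroDivisors_of_ne_zero hI⟩ = C) →
        Nat.card {I : Ideal (𝓞 K) // ∃ hI : I ≠ 0, Ideal.absNorm I = n ∧
            ClassGroup.mk0 ⟨I, mem_nonZeroDivisors_of_ne_zero hI⟩ = C} =
          Nat.card {I : Ideal (𝓞 K) // I ≠ 0 ∧ Ideal.absNorm I = n}) :=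
  stmt14_general K hdeg hexp
end
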